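/- Let N ≥ 1 be an integer, q ∈ ℝ^N with q_i > 0 for all i, and ρ > 0. Let λ ≥ 0 and set p* := p(λ), where p(λ)_i := q_i^{1/(1+λ)} / Σ_{j=1}^N q_j^{1/(1+λ)}. Suppose that either (a) λ = 0 and Σ_{i=1}^N p*_i·log(N·p*_i) ≤ ρ, or (b) Σ_{i=1}^N p*_i·log(N·p*_i) = ρ. Then p* ∈ P_{ρ,N} and p* maximizes the entropy-regularized objective over the constraint set: for every p ∈ P_{ρ,N}, Σ_{i=1}^N p_i·log(q_i) − Σ_{i=1}^N p_i·log(p_i) ≤ Σ_{i=1}^N p*_i·log(q_i) − Σ_{i=1}^N p*_i·log(p*_i), with the convention 0·log 0 = 0. -/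

import Mathlib

/-!
Writing `β = 1 / (1 + λ)`, the tilt satisfies `log q i = (1 + λ) (log p*_i + log S)` with
`S = ∑ j, q j ^ β`, so for every probability vector `p` the gap `F(p*) - F(p)` of the objective
`F(p) = ∑ p i log q i - ∑ p i log p i` splits as
`(1 + λ) (∑ p i log p i - ∑ p i log p*_i) + λ (∑ p*_i log p*_i - ∑ p i log p i)`.
The first term is nonnegative by Gibbs' inequality, the second by complementary slackness:
either `λ = 0`, or the KL constraint is active at `p*` while it holds at `p`.
-/

/-- The constraint set `P_{ρ,N}`: probability vectors on `{1,…,N}` whose KL divergence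
from the uniform vector is at most `ρ` (convention `0 · log 0 = 0` is automatic since
`Real.log 0 = 0`). -/
def Pset (N : ℕ) (ρ : ℝ) : Set (Fin N → ℝ) :=
  {p | (∀ i, 0 ≤ p i) ∧ ∑ i, p i = 1 ∧ ∑ i, p i * Real.log (N * p i) ≤ ρ}

/-- The exponentially reweighted vector `p(λ) i = (q i)^(1/(1+λ)) / ∑ j, (q j)^(1/(1+λ))`. -/
noncomputable def tilt (N : ℕ) (q : Fin N → ℝ) (lam : ℝ) : Fin N → ℝ :=
  fun i => q i ^ ((1 : ℝ) / (1 + lam)) / ∑ j, q j ^ ((1 : ℝ) / (1 + lam))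

open Finset Real

section Entropy

variable {ι : Type*} [Fintype ι]

theorem mul_log_sub_mul_log_le {a b : ℝ} (ha : 0 ≤ a) (hb : 0 < b) :
    a * log b - a * log a ≤ b - a := by
  rcases ha.eq_or_lt with rfl | ha
  · simpa using hb.le
  · calc a * log b - a * log a = a * log (b / a) := by
          rw [log_div hb.ne' ha.ne']; ring
      _ ≤ a * (b / a - 1) := by gcongr; exact log_le_sub_one_of_pos (div_pos hb ha)
      _ = b - a := by field_simp

theorem sum_mul_log_le_sum_mul_log_self {p r : ι → ℝ} (hp : ∀ i, 0 ≤ p i) (hr : ∀ i, 0 < r i)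
    (hsum : ∑ i, r i ≤ ∑ i, p i) :
    ∑ i, p i * log (r i) ≤ ∑ i, p i * log (p i) := by
  have hterm : ∑ i, (p i * log (r i) - p i * log (p i)) ≤ ∑ i, (r i - p i) :=
    sum_le_sum fun i _ => mul_log_sub_mul_log_le (hp i) (hr i)
  rw [sum_sub_distrib, sum_sub_distrib] at hterm
  linarith

theorem sum_mul_log_const_mul {p : ι → ℝ} (hp : ∑ i, p i = 1) {c : ℝ} (hc : c ≠ 0) :
    ∑ i, p i * log (c * p i) = log c + ∑ i, p i * log (p i) := by
  have hterm : ∀ i, p i * log (c * p i) = p i * log c + p i * log (p i) := fun i => by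
    rcases eq_or_ne (p i) 0 with h | h
    · simp [h]
    · rw [log_mul hc h]; ring
  rw [sum_congr rfl fun i _ => hterm i, sum_add_distrib, ← sum_mul, hp, one_mul]

/-- Sufficiency of the KKT conditions for the entropy-regularized problem: `hlog` is
stationarity with multiplier `λ` for the KL constraint, `hslack` is complementary slackness. -/
theorem sum_mul_log_sub_entropy_le {q pstar p : ι → ℝ} {lam c : ℝ} (hlam : 0 ≤ lam)
    (hpstar : ∀ i, 0 < pstar i) (hpstar_sum : ∑ i, pstar i = 1)
    (hp : ∀ i, 0 ≤ p i) (hp_sum : ∑ i, p i = 1)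
    (hlog : ∀ i, log (q i) = (1 + lam) * (log (pstar i) + c))
    (hslack : lam * ∑ i, p i * log (p i) ≤ lam * ∑ i, pstar i * log (pstar i)) :
    ∑ i, p i * log (q i) - ∑ i, p i * log (p i) ≤
      ∑ i, pstar i * log (q i) - ∑ i, pstar i * log (pstar i) := by
  have hcross : ∀ r : ι → ℝ, ∑ i, r i = 1 →
      ∑ i, r i * log (q i) = (1 + lam) * (∑ i, r i * log (pstar i) + c) := fun r hr => by
    simp_rw [hlog, mul_add, sum_add_distrib, ← sum_mul, hr, mul_left_comm (r _), ← mul_sum]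
    ring
  have hgibbs : (1 + lam) * ∑ i, p i * log (pstar i) ≤ (1 + lam) * ∑ i, p i * log (p i) :=
    mul_le_mul_of_nonneg_left
      (sum_mul_log_le_sum_mul_log_self hp hpstar (hpstar_sum.trans hp_sum.symm).le)
      (by linarith)
  rw [hcross p hp_sum, hcross pstar hpstar_sum]
  linarith

end Entropy

section Tilt

variable {N : ℕ} [NeZero N] {q : Fin N → ℝ} (lam : ℝ)

theorem sum_rpow_pos (hq : ∀ i, 0 < q i) : 0 < ∑ j, q j ^ ((1 : ℝ) / (1 + lam)) :=
  sum_pos (fun j _ => rpow_pos_of_pos (hq j) _) univ_nonempty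

theorem tilt_pos (hq : ∀ i, 0 < q i) (i : Fin N) : 0 < tilt N q lam i :=
  div_pos (rpow_pos_of_pos (hq i) _) (sum_rpow_pos lam hq)

theorem sum_tilt (hq : ∀ i, 0 < q i) : ∑ i, tilt N q lam i = 1 := by
  unfold tilt
  rw [← sum_div, div_self (sum_rpow_pos lam hq).ne']

theorem log_eq_mul_log_tilt_add (hq : ∀ i, 0 < q i) (hlam : 1 + lam ≠ 0) (i : Fin N) :
    log (q i) = (1 + lam) *
      (log (tilt N q lam i) + log (∑ j, q j ^ ((1 : ℝ) / (1 + lam)))) := by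
  rw [tilt, log_div (rpow_pos_of_pos (hq i) _).ne' (sum_rpow_pos lam hq).ne', log_rpow (hq i)]
  field_simp
  ring

end Tilt

theorem tilt_maximizes_over_Pset_general (N : ℕ) (hN : 1 ≤ N) (q : Fin N → ℝ) (hq : ∀ i, 0 < q i)
    (ρ : ℝ) (lam : ℝ) (hlam : 0 ≤ lam)
    (pstar : Fin N → ℝ) (hpstar : pstar = tilt N q lam)
    (hcase : (lam = 0 ∧ ∑ i, pstar i * Real.log (N * pstar i) ≤ ρ) ∨
      ∑ i, pstar i * Real.log (N * pstar i) = ρ) :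
    pstar ∈ Pset N ρ ∧
      ∀ p ∈ Pset N ρ,
        ∑ i, p i * Real.log (q i) - ∑ i, p i * Real.log (p i) ≤
          ∑ i, pstar i * Real.log (q i) - ∑ i, pstar i * Real.log (pstar i) := by
  have : NeZero N := ⟨Nat.one_le_iff_ne_zero.mp hN⟩
  have hN0 : (N : ℝ) ≠ 0 := by positivity
  subst hpstar
  have hpos := tilt_pos lam hq
  have hsum := sum_tilt lam hq
  refine ⟨⟨fun i => (hpos i).le, hsum, hcase.elim And.right le_of_eq⟩, ?_⟩
  rintro p ⟨hp, hp_sum, hp_KL⟩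
  refine sum_mul_log_sub_entropy_le hlam hpos hsum hp hp_sum
    (log_eq_mul_log_tilt_add lam hq (by linarith)) ?_
  rw [sum_mul_log_const_mul hp_sum hN0] at hp_KL
  rcases hcase with ⟨rfl, -⟩ | hactive
  · simp
  · rw [sum_mul_log_const_mul hsum hN0] at hactive
    exact mul_le_mul_of_nonneg_left (by linarith) hlam

/-- **FedMABA's closed-form update is the exact mirror-ascent step.** For `q i > 0`, `ρ > 0`,
`λ ≥ 0` and `p* = p(λ)`, if either (a) `λ = 0` and `KL(p*‖u) ≤ ρ`, or (b) `KL(p*‖u) = ρ`,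
then `p* ∈ P_{ρ,N}` and `p*` maximizes the entropy-regularized objective
`p ↦ ∑ p i log (q i) - ∑ p i log (p i)` over `P_{ρ,N}`. -/
theorem tilt_maximizes_over_Pset (N : ℕ) (hN : 1 ≤ N) (q : Fin N → ℝ) (hq : ∀ i, 0 < q i)
    (ρ : ℝ) (hρ : 0 < ρ) (lam : ℝ) (hlam : 0 ≤ lam)
    (pstar : Fin N → ℝ) (hpstar : pstar = tilt N q lam)
    (hcase : (lam = 0 ∧ ∑ i, pstar i * Real.log (N * pstar i) ≤ ρ) ∨
      ∑ i, pstar i * Real.log (N * pstar i) = ρ) :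
    pstar ∈ Pset N ρ ∧
      ∀ p ∈ Pset N ρ,
        ∑ i, p i * Real.log (q i) - ∑ i, p i * Real.log (p i) ≤
          ∑ i, pstar i * Real.log (q i) - ∑ i, pstar i * Real.log (pstar i) :=
  tilt_maximizes_over_Pset_general N hN q hq ρ lam hlam pstar hpstar hcase
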